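/- Let γ : ℝ≥0 → X be an almost-geodesic converging to a horofunction ξ, and let η be any horofunction. Then H(ξ,η) = lim_{t→∞} ( d(b,γ(t)) + η(γ(t)) ). In particular, H(ξ,ξ) = 0 for every Busemann point ξ. -/

import Mathlib

/-!
Every horofunction `ζ` satisfies `ζ x ≤ d x y + ζ y`. Hence along any path `σ` converging to `ξ`,
`d b (σ u) + ζ (σ u) ≥ ζ y - (d y (σ u) - d b (σ u)) → ζ y - ξ y`, so `H(ξ,ζ) ≥ ζ y - ξ y` for
every `y`. Along an almost-geodesic `γ` converging to `ξ`, the base point is almost on the way: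
`d b (γ s) + d (γ s) (γ t) ≤ d b (γ t) + o(1)` for `s ≤ t`, and letting `t → ∞` gives
`d b (γ s) + ξ (γ s) → 0`. Taking `y = γ t` gives `d b (γ t) + η (γ t) ≤ H(ξ,η) + o(1)`, while `γ` is itself a competitor
in the infimum defining `H(ξ,η)`, so `H(ξ,η)` bounds the `liminf` from below. For `η = ξ` the
limit is `0`.
-/

/-- The detour cost `H(ξ,η)`, as an infimum over paths `γ : ℝ≥0 → X` converging to `ξ`
of `liminf_{t → ∞} (d b (γ t) + η (γ t))`, valued in `EReal`. -/
noncomputable def detourCostPath {X : Type*} (d : X → X → ℝ) (b : X) (ξ η : X → ℝ) :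
    EReal :=
  sInf { c : EReal | ∃ γ : ℝ → X,
    (∀ x, Filter.Tendsto (fun t => d x (γ t) - d b (γ t)) Filter.atTop (nhds (ξ x))) ∧
    c = Filter.liminf (fun t => ((d b (γ t) + η (γ t) : ℝ) : EReal)) Filter.atTop }

open Filter Topology

section

variable {X : Type*} (d : X → X → ℝ) (b : X)

def TendstoHorofunction (γ : ℝ → X) (ξ : X → ℝ) : Prop :=
  ∀ x, Tendsto (fun t => d x (γ t) - d b (γ t)) atTop (𝓝 (ξ x))

def IsAlmostGeodesic (γ : ℝ → X) : Prop :=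
  ∀ ε > (0 : ℝ), ∃ T : ℝ, ∀ s t : ℝ, T ≤ s → s ≤ t → |d (γ 0) (γ s) + d (γ s) (γ t) - t| < ε

variable {d b}

namespace TendstoHorofunction

variable {γ : ℝ → X} {ξ : X → ℝ}

theorem le_dist_add (htri : ∀ x y z, d x z ≤ d x y + d y z) (h : TendstoHorofunction d b γ ξ)
    (x y : X) : ξ x ≤ d x y + ξ y :=
  le_of_tendsto_of_tendsto (h x) (tendsto_const_nhds.add (h y)) <| Eventually.of_forall fun t => by
    linarith [htri x y (γ t)]

theorem apply_base (h : TendstoHorofunction d b γ ξ) : ξ b = 0 :=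
  tendsto_nhds_unique (h b) (by simp)

theorem sub_le_liminf {ζ : X → ℝ} (h : TendstoHorofunction d b γ ξ)
    (hζ : ∀ x y, ζ x ≤ d x y + ζ y) (y : X) :
    ((ζ y - ξ y : ℝ) : EReal) ≤ liminf (fun t => ((d b (γ t) + ζ (γ t) : ℝ) : EReal)) atTop := by
  have hlim : Tendsto (fun t => ((ζ y - (d y (γ t) - d b (γ t)) : ℝ) : EReal)) atTop
      (𝓝 ((ζ y - ξ y : ℝ) : EReal)) :=
    EReal.tendsto_coe.2 (tendsto_const_nhds.sub (h y))
  rw [← hlim.liminf_eq]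
  exact liminf_le_liminf <| Eventually.of_forall fun t => EReal.coe_le_coe_iff.2 <| by
    linarith [hζ y (γ t)]

end TendstoHorofunction

theorem sub_le_detourCostPath {ξ ζ : X → ℝ} (hζ : ∀ x y, ζ x ≤ d x y + ζ y) (y : X) :
    ((ζ y - ξ y : ℝ) : EReal) ≤ detourCostPath d b ξ ζ := by
  refine le_sInf ?_
  rintro _ ⟨σ, hσ, rfl⟩
  exact TendstoHorofunction.sub_le_liminf hσ hζ y

theorem TendstoHorofunction.tendsto_detourCostPath {γ : ℝ → X} {ξ ζ : X → ℝ}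
    (hγ : TendstoHorofunction d b γ ξ)
    (hξ : Tendsto (fun t => d b (γ t) + ξ (γ t)) atTop (𝓝 0))
    (hζ : ∀ x y, ζ x ≤ d x y + ζ y) :
    Tendsto (fun t => ((d b (γ t) + ζ (γ t) : ℝ) : EReal)) atTop (𝓝 (detourCostPath d b ξ ζ)) := by
  set H := detourCostPath d b ξ ζ
  have hupper (t : ℝ) :
      ((d b (γ t) + ζ (γ t) : ℝ) : EReal) ≤ H + ((d b (γ t) + ξ (γ t) : ℝ) : EReal) :=
    calc ((d b (γ t) + ζ (γ t) : ℝ) : EReal)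
        = ((ζ (γ t) - ξ (γ t) : ℝ) : EReal) + ((d b (γ t) + ξ (γ t) : ℝ) : EReal) := by
          rw [← EReal.coe_add]; congr 1; ring
      _ ≤ H + _ := by gcongr; exact sub_le_detourCostPath hζ (γ t)
  have hH : Tendsto (fun t => H + ((d b (γ t) + ξ (γ t) : ℝ) : EReal)) atTop (𝓝 H) := by
    have := (EReal.continuousAt_add (p := (H, 0)) (Or.inr (by simp)) (Or.inr (by simp))).tendsto
      |>.comp (tendsto_const_nhds.prodMk_nhds (EReal.tendsto_coe.2 hξ))
    simpa [Function.comp_def] using this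
  refine tendsto_of_le_liminf_of_limsup_le (sInf_le ⟨γ, hγ, rfl⟩) ?_
  exact (limsup_le_limsup (Eventually.of_forall hupper)).trans hH.limsup_eq.le

namespace IsAlmostGeodesic

variable {γ : ℝ → X}

theorem eventually_dist_add_dist_lt (hγ : IsAlmostGeodesic d γ) (hself : ∀ x, d x x = 0)
    {ε : ℝ} (hε : 0 < ε) :
    ∀ᶠ s in atTop, ∀ t, s ≤ t → d (γ 0) (γ s) + d (γ s) (γ t) < d (γ 0) (γ t) + ε := by
  obtain ⟨T, hT⟩ := hγ (ε / 2) (by positivity)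
  refine eventually_atTop.2 ⟨T, fun s hs t hst => ?_⟩
  have hst' := abs_lt.1 (hT s t hs hst)
  have htt := abs_lt.1 (hT t t (hs.trans hst) le_rfl)
  rw [hself, add_zero] at htt
  linarith [hst'.2, htt.1]

theorem eventually_dist_base_add_dist_lt (hγ : IsAlmostGeodesic d γ) (hself : ∀ x, d x x = 0)
    {c : ℝ} (hc : Tendsto (fun t => d (γ 0) (γ t) - d b (γ t)) atTop (𝓝 c)) {ε : ℝ} (hε : 0 < ε) :
    ∀ᶠ s in atTop, ∀ t, s ≤ t → d b (γ s) + d (γ s) (γ t) < d b (γ t) + ε := by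
  have hnear : ∀ᶠ s in atTop, |d (γ 0) (γ s) - d b (γ s) - c| < ε / 4 := by
    simpa only [Real.dist_eq] using Metric.tendsto_nhds.1 hc (ε / 4) (by positivity)
  filter_upwards [hγ.eventually_dist_add_dist_lt hself (half_pos hε),
    eventually_forall_ge_atTop.2 hnear] with s hgeo hfar t hst
  have hs := abs_lt.1 (hfar s le_rfl)
  have ht := abs_lt.1 (hfar t hst)
  linarith [hgeo t hst, hs.2, ht.1]

theorem tendsto_dist_base_add_horofunction (hγ : IsAlmostGeodesic d γ)
    (htri : ∀ x y z, d x z ≤ d x y + d y z) (hself : ∀ x, d x x = 0) {ξ : X → ℝ}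
    (hξ : TendstoHorofunction d b γ ξ) :
    Tendsto (fun t => d b (γ t) + ξ (γ t)) atTop (𝓝 0) := by
  have hnonneg : ∀ t, 0 ≤ d b (γ t) + ξ (γ t) := fun t => by
    linarith [hξ.le_dist_add htri b (γ t), hξ.apply_base]
  refine tendsto_order.2 ⟨fun a ha => Eventually.of_forall fun t => ha.trans_le (hnonneg t),
    fun a ha => ?_⟩
  filter_upwards [hγ.eventually_dist_base_add_dist_lt hself (hξ (γ 0)) (half_pos ha)] with s hs
  have : ξ (γ s) ≤ a / 2 - d b (γ s) :=
    le_of_tendsto (hξ (γ s)) (eventually_atTop.2 ⟨s, fun t hst => by linarith [hs t hst]⟩)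
  linarith

end IsAlmostGeodesic

end

theorem detourCost_along_almost_geodesic_general {X : Type*} (d : X → X → ℝ) (b : X)
    (hzero : ∀ x y, d x y = 0 ↔ x = y)
    (htri : ∀ x y z, d x z ≤ d x y + d y z)
    (γ : ℝ → X) (ξ η : X → ℝ)
    (hgeo : ∀ ε > (0:ℝ), ∃ T : ℝ, ∀ s t : ℝ, T ≤ s → s ≤ t →
      |d (γ 0) (γ s) + d (γ s) (γ t) - t| < ε)
    (hconv : ∀ x, Filter.Tendsto (fun t => d x (γ t) - d b (γ t)) Filter.atTop
      (nhds (ξ x)))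
    (hη : ∃ γ' : ℝ → X,
      ∀ x, Filter.Tendsto (fun t => d x (γ' t) - d b (γ' t)) Filter.atTop (nhds (η x))) :
    Filter.Tendsto (fun t => ((d b (γ t) + η (γ t) : ℝ) : EReal)) Filter.atTop
        (nhds (detourCostPath d b ξ η)) ∧
      detourCostPath d b ξ ξ = 0 := by
  obtain ⟨γ', hγ'⟩ := hη
  have hγ : IsAlmostGeodesic d γ := hgeo
  have hγξ : TendstoHorofunction d b γ ξ := hconv
  have hξ : Tendsto (fun t => d b (γ t) + ξ (γ t)) atTop (𝓝 0) :=
    hγ.tendsto_dist_base_add_horofunction htri (fun x => (hzero x x).2 rfl) hγξ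
  have hηlip : ∀ x y, η x ≤ d x y + η y := TendstoHorofunction.le_dist_add htri hγ'
  refine ⟨hγξ.tendsto_detourCostPath hξ hηlip, ?_⟩
  exact tendsto_nhds_unique (hγξ.tendsto_detourCostPath hξ (hγξ.le_dist_add htri))
    (by simpa using EReal.tendsto_coe.2 hξ)

/-- if `γ` is an almost-geodesic converging to the horofunction `ξ`, then
for any horofunction `η`, `H(ξ,η) = lim_{t→∞} (d b (γ t) + η (γ t))`; in particular
`H(ξ,ξ) = 0`, i.e. the detour cost from a Busemann point to itself vanishes. -/
theorem detourCost_along_almost_geodesic {X : Type*} (d : X → X → ℝ) (b : X)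
    (hpos : ∀ x y, 0 ≤ d x y) (hzero : ∀ x y, d x y = 0 ↔ x = y)
    (htri : ∀ x y z, d x z ≤ d x y + d y z)
    (γ : ℝ → X) (ξ η : X → ℝ)
    (hgeo : ∀ ε > (0:ℝ), ∃ T : ℝ, ∀ s t : ℝ, T ≤ s → s ≤ t →
      |d (γ 0) (γ s) + d (γ s) (γ t) - t| < ε)
    (hconv : ∀ x, Filter.Tendsto (fun t => d x (γ t) - d b (γ t)) Filter.atTop
      (nhds (ξ x)))
    (hη : ∃ γ' : ℝ → X,
      ∀ x, Filter.Tendsto (fun t => d x (γ' t) - d b (γ' t)) Filter.atTop (nhds (η x))) :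
    Filter.Tendsto (fun t => ((d b (γ t) + η (γ t) : ℝ) : EReal)) Filter.atTop
        (nhds (detourCostPath d b ξ η)) ∧
      detourCostPath d b ξ ξ = 0 :=
  detourCost_along_almost_geodesic_general d b hzero htri γ ξ η hgeo hconv hη
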